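/- Let F : ℝ → ℝ, d ∈ ℕ, δ ≥ 0, and keys k_1 < k_2 < ⋯ < k_n. Suppose 0 = g_0 < g_1 < ⋯ < g_t = n is the greedy boundary sequence, meaning that for each i < t, g_{i+1} is the largest index m with g_i < m ≤ n such that E_d({k_{g_i+1}, …, k_m}) ≤ δ. Then for every δ-feasible segmentation 0 = b_0 < b_1 < ⋯ < b_h = n one has t ≤ h; that is, the greedy segmentation uses the minimum possible number of intervals among all δ-feasible segmentations. -/

import Mathlib

/-!
Greedy "stays ahead": if an arbitrary feasible segmentation has its `i`-th boundary at or before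
the greedy one, then its `(i+1)`-st block, cut down to start after the greedy boundary, is still
feasible (fitting fewer keys can only lower the minimax error), so maximality of the greedy step
puts the next greedy boundary at or beyond it. Were `h < t`, this would give
`n = b h ≤ g h < g t = n`.
-/

/-- Minimax polynomial fitting error of degree `d` for `F` on the key set `S`:
`E_d(S) = inf over (a_0,…,a_d) ∈ ℝ^{d+1} of sup_{k ∈ S} |F k - Σ_j a_j k^j|`. -/
noncomputable def fitError (F : ℝ → ℝ) (d : ℕ) (S : Set ℝ) : ℝ :=
  ⨅ a : Fin (d + 1) → ℝ,
    sSup ((fun x => |F x - ∑ j : Fin (d + 1), a j * x ^ (j : ℕ)|) '' S)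

lemma sSup_image_abs_nonneg (f : ℝ → ℝ) (S : Set ℝ) : 0 ≤ sSup ((fun x => |f x|) '' S) :=
  Real.sSup_nonneg fun _ ⟨_, _, hy⟩ => hy ▸ abs_nonneg _

lemma sSup_image_abs_mono (f : ℝ → ℝ) {S T : Set ℝ} (hT : T.Finite) (hST : S ⊆ T) :
    sSup ((fun x => |f x|) '' S) ≤ sSup ((fun x => |f x|) '' T) := by
  rcases S.eq_empty_or_nonempty with rfl | hS
  · simpa only [Set.image_empty, Real.sSup_empty] using sSup_image_abs_nonneg f T
  · exact csSup_le_csSup (hT.image _).bddAbove (hS.image _) (Set.image_mono hST)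

lemma fitError_mono (F : ℝ → ℝ) (d : ℕ) {S T : Set ℝ} (hT : T.Finite) (hST : S ⊆ T) :
    fitError F d S ≤ fitError F d T :=
  ciInf_mono ⟨0, Set.forall_mem_range.2 fun _ => sSup_image_abs_nonneg _ S⟩
    fun _ => sSup_image_abs_mono _ hT hST

section Greedy

variable {P : ℕ → ℕ → Prop} {n t h : ℕ} {g b : ℕ → ℕ}

/-- `P a c` reads "the block of indices `(a, c]` is feasible"; `hP` says that feasibility
survives removing keys from the left end of a block. -/
lemma greedy_stays_ahead (hP : ∀ a a' c, a ≤ a' → a' < c → P a c → P a' c)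
    (hg : ∀ i < t, g i < g (i + 1))
    (hgmax : ∀ i < t, ∀ m, g i < m → m ≤ n → P (g i) m → m ≤ g (i + 1))
    (hb0 : b 0 ≤ g 0) (hbn : ∀ i < h, b (i + 1) ≤ n) (hbP : ∀ i < h, P (b i) (b (i + 1))) :
    ∀ i ≤ t, i ≤ h → b i ≤ g i
  | 0, _, _ => hb0
  | i + 1, hit, hih => by
    have hbg : b i ≤ g i := greedy_stays_ahead hP hg hgmax hb0 hbn hbP i (by omega) (by omega)
    by_cases hc : b (i + 1) ≤ g i
    · exact hc.trans (hg i hit).le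
    · rw [not_le] at hc
      exact hgmax i hit _ hc (hbn i hih) (hP _ _ _ hbg hc (hbP i hih))

lemma greedy_count_le (hP : ∀ a a' c, a ≤ a' → a' < c → P a c → P a' c)
    (hg : ∀ i < t, g i < g (i + 1))
    (hgmax : ∀ i < t, ∀ m, g i < m → m ≤ n → P (g i) m → m ≤ g (i + 1)) (hgt : g t = n)
    (hb0 : b 0 ≤ g 0) (hbh : b h = n) (hbn : ∀ i < h, b (i + 1) ≤ n)
    (hbP : ∀ i < h, P (b i) (b (i + 1))) :
    t ≤ h := by
  by_contra! hht
  have hbg : b h ≤ g h := greedy_stays_ahead hP hg hgmax hb0 hbn hbP h hht.le le_rfl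
  have hgg : g h < g t :=
    strictMonoOn_Iic_of_lt_succ (fun i hi => hg i hi) (Set.mem_Iic.2 hht.le) (Set.mem_Iic.2 le_rfl) hht
  omega

end Greedy

theorem greedy_min_intervals_general (F : ℝ → ℝ) (d : ℕ) (δ : ℝ)
    (n : ℕ) (k : ℕ → ℝ)
    -- greedy boundary sequence 0 = g 0 < g 1 < ⋯ < g t = n
    (t : ℕ) (g : ℕ → ℕ) (hgt : g t = n)
    (hgreedy : ∀ i < t, g i < g (i + 1) ∧ g (i + 1) ≤ n ∧
      fitError F d (k '' Set.Icc (g i + 1) (g (i + 1))) ≤ δ ∧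
      ∀ m, g i < m → m ≤ n →
        fitError F d (k '' Set.Icc (g i + 1) m) ≤ δ → m ≤ g (i + 1))
    -- arbitrary δ-feasible segmentation 0 = b 0 < b 1 < ⋯ < b h = n
    (h : ℕ) (b : ℕ → ℕ) (hb0 : b 0 = 0) (hbh : b h = n)
    (hbn : ∀ i < h, b (i + 1) ≤ n)
    (hbfeas : ∀ i < h, fitError F d (k '' Set.Icc (b i + 1) (b (i + 1))) ≤ δ) :
    t ≤ h := by
  have shrink : ∀ a a' c, a ≤ a' → a' < c → fitError F d (k '' Set.Icc (a + 1) c) ≤ δ →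
      fitError F d (k '' Set.Icc (a' + 1) c) ≤ δ := fun a a' c ha _ hfeas =>
    (fitError_mono F d ((Set.finite_Icc _ _).image k)
      (Set.image_mono (Set.Icc_subset_Icc (by omega) le_rfl))).trans hfeas
  exact greedy_count_le shrink (fun i hi => (hgreedy i hi).1) (fun i hi => (hgreedy i hi).2.2.2)
    hgt (hb0.trans_le (Nat.zero_le _)) hbh hbn hbfeas

/-- The greedy segmentation uses the minimum possible number of
intervals among all δ-feasible segmentations. -/
theorem greedy_min_intervals (F : ℝ → ℝ) (d : ℕ) (δ : ℝ) (hδ : 0 ≤ δ)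
    (n : ℕ) (k : ℕ → ℝ)
    (hk : ∀ i j, 1 ≤ i → i < j → j ≤ n → k i < k j)
    -- greedy boundary sequence 0 = g 0 < g 1 < ⋯ < g t = n
    (t : ℕ) (g : ℕ → ℕ) (hg0 : g 0 = 0) (hgt : g t = n)
    (hgreedy : ∀ i < t, g i < g (i + 1) ∧ g (i + 1) ≤ n ∧
      fitError F d (k '' Set.Icc (g i + 1) (g (i + 1))) ≤ δ ∧
      ∀ m, g i < m → m ≤ n →
        fitError F d (k '' Set.Icc (g i + 1) m) ≤ δ → m ≤ g (i + 1))
    -- arbitrary δ-feasible segmentation 0 = b 0 < b 1 < ⋯ < b h = n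
    (h : ℕ) (b : ℕ → ℕ) (hb0 : b 0 = 0) (hbh : b h = n)
    (hbmono : ∀ i < h, b i < b (i + 1))
    (hbn : ∀ i < h, b (i + 1) ≤ n)
    (hbfeas : ∀ i < h, fitError F d (k '' Set.Icc (b i + 1) (b (i + 1))) ≤ δ) :
    t ≤ h :=
  greedy_min_intervals_general F d δ n k t g hgt hgreedy h b hb0 hbh hbn hbfeas
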